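/- K = S^n_++ ∩ V equals the set {Tᵀ·T : T ∈ 𝕋_++}, and for every X ∈ K there is a unique T ∈ 𝕋_++ with X = Tᵀ·T. -/

import Mathlib

noncomputable section
open scoped Classical
open Matrix

/-- A face of a convex cone `C`: a nonempty convex subset `F ⊆ C` such that whenever the open
segment between two points of `C` meets `F`, both endpoints lie in `F`. -/
def IsFaceOf {E : Type*} [AddCommGroup E] [Module ℝ E] (F C : Set E) : Prop :=
  F.Nonempty ∧ F ⊆ C ∧ Convex ℝ F ∧
    ∀ x ∈ C, ∀ y ∈ C, (∃ t : ℝ, 0 < t ∧ t < 1 ∧ t • x + (1 - t) • y ∈ F) → x ∈ F ∧ y ∈ F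

/-- An extreme ray of `C`: a face whose linear span is one-dimensional. -/
def IsExtremeRayOf {E : Type*} [AddCommGroup E] [Module ℝ E] (R C : Set E) : Prop :=
  IsFaceOf R C ∧ Module.finrank ℝ (Submodule.span ℝ R) = 1

/-- `x` is a sum of at most `m` points, each lying on an extreme ray of `C`. -/
def SumExtreme {E : Type*} [AddCommGroup E] [Module ℝ E] (C : Set E) (m : ℕ) (x : E) : Prop :=
  ∃ (k : ℕ) (f : Fin k → E), k ≤ m ∧ (∀ i, ∃ R, IsExtremeRayOf R C ∧ f i ∈ R) ∧ x = ∑ i, f i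

/-- The Carathéodory number of the cone `C`. -/
def caraNumber {E : Type*} [AddCommGroup E] [Module ℝ E] (C : Set E) : ℕ :=
  sInf {m | ∀ x ∈ C, SumExtreme C m x}

/-- The ray generated by a point. -/
def ray {E : Type*} [AddCommGroup E] [Module ℝ E] (A : E) : Set E :=
  {X | ∃ c : ℝ, 0 ≤ c ∧ X = c • A}

/-- The trace (Frobenius) inner product on spaces of rectangular real matrices. -/
def trInner {a b : Type*} [Fintype a] [Fintype b] (X Y : Matrix a b ℝ) : ℝ :=
  Matrix.trace (Xᵀ * Y)

/-- `y` is the orthogonal projection of `x` onto the subspace `W` (with respect to the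
trace inner product). -/
def IsProjOn {a b : Type*} [Fintype a] [Fintype b] (W : Set (Matrix a b ℝ))
    (x y : Matrix a b ℝ) : Prop :=
  y ∈ W ∧ ∀ w ∈ W, trInner (x - y) w = 0

/-- The image of the set `S` under orthogonal projection onto the subspace `W`. -/
def projSet {a b : Type*} [Fintype a] [Fintype b] (W S : Set (Matrix a b ℝ)) :
    Set (Matrix a b ℝ) :=
  {y | ∃ x ∈ S, IsProjOn W x y}

/-- The cone of positive semidefinite matrices. -/
def PSD (ι : Type*) [Fintype ι] : Set (Matrix ι ι ℝ) := {X | X.PosSemidef}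

variable {r : ℕ}

/-- Index type for an `n₁ + ⋯ + n_r` block partition. -/
abbrev BIx (n : Fin r → ℕ) : Type := Σ i : Fin r, Fin (n i)

/-- The `(i,j)` block of a block matrix. -/
def blk {n : Fin r → ℕ} (X : Matrix (BIx n) (BIx n) ℝ) (i j : Fin r) :
    Matrix (Fin (n i)) (Fin (n j)) ℝ :=
  Matrix.of fun a b => X ⟨i, a⟩ ⟨j, b⟩

/-- The space `V` of symmetric block matrices whose blocks lie in the subspaces `Vb i j`
(for `i ≤ j`; the diagonal subspaces `Vb i i` are required elsewhere to be `ℝ·I`). -/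
def Vset (n : Fin r → ℕ)
    (Vb : ∀ i j : Fin r, Submodule ℝ (Matrix (Fin (n i)) (Fin (n j)) ℝ)) :
    Set (Matrix (BIx n) (BIx n) ℝ) :=
  {X | X.IsSymm ∧ ∀ i j : Fin r, i ≤ j → blk X i j ∈ Vb i j}

/-- The set `𝕋` of upper block-triangular matrices with diagonal blocks in `ℝ·I` and
off-diagonal blocks in the `Vb i j`. -/
def TT (n : Fin r → ℕ)
    (Vb : ∀ i j : Fin r, Submodule ℝ (Matrix (Fin (n i)) (Fin (n j)) ℝ)) :
    Set (Matrix (BIx n) (BIx n) ℝ) :=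
  {T | (∀ i j : Fin r, j < i → blk T i j = 0) ∧
    (∀ i : Fin r, ∃ c : ℝ, blk T i i = c • (1 : Matrix (Fin (n i)) (Fin (n i)) ℝ)) ∧
    (∀ i j : Fin r, i < j → blk T i j ∈ Vb i j)}

/-- The set `𝕋₊₊ ⊆ 𝕋` of matrices with positive diagonal entries. -/
def TTpp (n : Fin r → ℕ)
    (Vb : ∀ i j : Fin r, Submodule ℝ (Matrix (Fin (n i)) (Fin (n j)) ℝ)) :
    Set (Matrix (BIx n) (BIx n) ℝ) :=
  {T | (∀ i j : Fin r, j < i → blk T i j = 0) ∧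
    (∀ i : Fin r, ∃ c : ℝ, 0 < c ∧ blk T i i = c • (1 : Matrix (Fin (n i)) (Fin (n i)) ℝ)) ∧
    (∀ i j : Fin r, i < j → blk T i j ∈ Vb i j)}

/-- The Ishi spectrahedral cone `K = S^n_{++} ∩ V`. -/
def Kcone (n : Fin r → ℕ)
    (Vb : ∀ i j : Fin r, Submodule ℝ (Matrix (Fin (n i)) (Fin (n j)) ℝ)) :
    Set (Matrix (BIx n) (BIx n) ℝ) :=
  {X | X.PosDef ∧ X ∈ Vset n Vb}

/-- The closure `S^n_+ ∩ V` of the Ishi spectrahedral cone. -/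
def KclSet (n : Fin r → ℕ)
    (Vb : ∀ i j : Fin r, Submodule ℝ (Matrix (Fin (n i)) (Fin (n j)) ℝ)) :
    Set (Matrix (BIx n) (BIx n) ℝ) :=
  {X | X.PosSemidef ∧ X ∈ Vset n Vb}

/-- The dual cone `D = proj_V (S^n_+)` of `K` in `V`. -/
def dualD (n : Fin r → ℕ)
    (Vb : ∀ i j : Fin r, Submodule ℝ (Matrix (Fin (n i)) (Fin (n j)) ℝ)) :
    Set (Matrix (BIx n) (BIx n) ℝ) :=
  projSet (Vset n Vb) (PSD (BIx n))

/-- The subspace `V^B` of matrices of `V` supported on blocks indexed by `B × B`. -/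
def VBset (n : Fin r → ℕ)
    (Vb : ∀ i j : Fin r, Submodule ℝ (Matrix (Fin (n i)) (Fin (n j)) ℝ))
    (B : Finset (Fin r)) : Set (Matrix (BIx n) (BIx n) ℝ) :=
  {X | X ∈ Vset n Vb ∧ ∀ i j : Fin r, i ≤ j → (i ∉ B ∨ j ∉ B) → blk X i j = 0}

/-- The matrix `I^B` whose diagonal blocks indexed by `B` are identity blocks and whose
other blocks vanish. -/
def IB (n : Fin r → ℕ) (B : Finset (Fin r)) : Matrix (BIx n) (BIx n) ℝ :=
  Matrix.of fun a b => if a = b ∧ a.1 ∈ B then 1 else 0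

/-- The face `F_{T,B} = Tᵀ·(S^n_+ ∩ V^B)·T` of the closure `S^n_+ ∩ V`. -/
def FTB (n : Fin r → ℕ)
    (Vb : ∀ i j : Fin r, Submodule ℝ (Matrix (Fin (n i)) (Fin (n j)) ℝ))
    (T : Matrix (BIx n) (BIx n) ℝ) (B : Finset (Fin r)) :
    Set (Matrix (BIx n) (BIx n) ℝ) :=
  {Y | ∃ X, Matrix.PosSemidef X ∧ X ∈ VBset n Vb B ∧ Y = Tᵀ * X * T}

/-- The face `F^*_{T,N} = proj_V (T · proj_{V^N}(S^n_+) · Tᵀ)` of the dual cone. -/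
def FstarTN (n : Fin r → ℕ)
    (Vb : ∀ i j : Fin r, Submodule ℝ (Matrix (Fin (n i)) (Fin (n j)) ℝ))
    (T : Matrix (BIx n) (BIx n) ℝ) (N : Finset (Fin r)) :
    Set (Matrix (BIx n) (BIx n) ℝ) :=
  {Z | ∃ Y ∈ projSet (VBset n Vb N) (PSD (BIx n)), IsProjOn (Vset n Vb) (T * Y * Tᵀ) Z}

/-!
A matrix `T ∈ 𝕋₊₊` is block upper triangular with positive scalar diagonal blocks, hence
invertible, so `Tᵀ * T` is positive definite; axioms [V2] and [V3] put its blocks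
`∑ₖ T_kiᵀ T_kj` into `V`, and [V1] makes `𝕋₊₊` closed under products.

Conversely, `X ∈ K` is reduced to the identity one block row at a time; the invariant
`X * IB n B = IB n B` says that `X` agrees with the identity on the block columns (hence, by
symmetry, rows) in `B`. If it holds for the blocks before `m` and `X_mm = c • 1`, then with
`P = IB n {m}` we get `X = Lᵀ * X' * L`, where
`L = 1 - P + c^(-1/2) • P * X ∈ 𝕋₊₊` and `X' = X - c⁻¹ • X * P * X + P` lies in `K` again
and agrees with the identity up to block `m`.

Uniqueness: the `(i, j)` block of `Tᵀ * T` is `c_i • T_ij` plus terms involving only the block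
rows above `i`, so `Tᵀ * T` determines the block rows of `T` from the top down.
-/

section Schur

variable {𝕜 A : Type*} [Field 𝕜] [Ring A] [Algebra 𝕜 A]

/-- For an idempotent `P` with `P * X * P = c • P`, the Schur complement of the `P`-block of `X`,
padded with the identity `P` on that block. -/
def paddedSchur (c : 𝕜) (P X : A) : A := X - c⁻¹ • (X * P * X) + P

variable {c : 𝕜} {P X : A}

lemma paddedSchur_mul_self (hP : P * P = P) (hPXP : P * X * P = c • P) (hc : c ≠ 0) :
    paddedSchur c P X * P = P := by
  have : X * P * X * P = c • (X * P) :=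
    calc X * P * X * P = X * (P * X * P) := by simp only [mul_assoc]
      _ = c • (X * P) := by rw [hPXP, mul_smul_comm]
  simp only [paddedSchur, add_mul, sub_mul, smul_mul_assoc, this, smul_smul, inv_mul_cancel₀ hc,
    one_smul, sub_self, zero_add, hP]

lemma self_mul_paddedSchur (hP : P * P = P) (hPXP : P * X * P = c • P) (hc : c ≠ 0) :
    P * paddedSchur c P X = P := by
  have : P * (X * P * X) = c • (P * X) := by
    rw [← mul_assoc, ← mul_assoc, hPXP, smul_mul_assoc]
  simp only [paddedSchur, mul_add, mul_sub, mul_smul_comm, this, smul_smul, inv_mul_cancel₀ hc,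
    one_smul, sub_self, zero_add, hP]

lemma paddedSchur_factorization {s : 𝕜} (hP : P * P = P) (hPXP : P * X * P = c • P)
    (hs : s * s = c) (hs0 : s ≠ 0) :
    (1 - P + s⁻¹ • (X * P)) * paddedSchur c P X * (1 - P + s⁻¹ • (P * X)) = X := by
  have hc : c ≠ 0 := hs ▸ mul_ne_zero hs0 hs0
  have hR := paddedSchur_mul_self hP hPXP hc
  have hL := self_mul_paddedSchur hP hPXP hc
  set M := paddedSchur c P X - P + s⁻¹ • (P * X)
  have hXL : paddedSchur c P X * (1 - P + s⁻¹ • (P * X)) = M := by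
    rw [mul_add, mul_sub, mul_one, hR, mul_smul_comm, ← mul_assoc, hR]
  have hPM : P * M = s⁻¹ • (P * X) := by
    rw [mul_add, mul_sub, hL, hP, mul_smul_comm, ← mul_assoc, hP, sub_self, zero_add]
  have hXPM : X * P * M = s⁻¹ • (X * P * X) := by
    rw [mul_assoc, hPM, mul_smul_comm, mul_assoc]
  rw [mul_assoc, hXL, add_mul, sub_mul, one_mul, hPM, smul_mul_assoc, hXPM, smul_smul,
    ← mul_inv, hs]
  simp only [M, paddedSchur]
  abel

end Schur

section BlockCalculus

variable {n : Fin r → ℕ}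

lemma blk_ext {X Y : Matrix (BIx n) (BIx n) ℝ} (h : ∀ i j, blk X i j = blk Y i j) : X = Y := by
  ext ⟨i, a⟩ ⟨j, b⟩
  exact congrFun (congrFun (h i j) a) b

@[simp] lemma blk_add (X Y : Matrix (BIx n) (BIx n) ℝ) (i j : Fin r) :
    blk (X + Y) i j = blk X i j + blk Y i j := rfl

@[simp] lemma blk_sub (X Y : Matrix (BIx n) (BIx n) ℝ) (i j : Fin r) :
    blk (X - Y) i j = blk X i j - blk Y i j := rfl

@[simp] lemma blk_smul (c : ℝ) (X : Matrix (BIx n) (BIx n) ℝ) (i j : Fin r) :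
    blk (c • X) i j = c • blk X i j := rfl

@[simp] lemma blk_transpose (X : Matrix (BIx n) (BIx n) ℝ) (i j : Fin r) :
    blk Xᵀ i j = (blk X j i)ᵀ := rfl

lemma blk_mul (X Y : Matrix (BIx n) (BIx n) ℝ) (i j : Fin r) :
    blk (X * Y) i j = ∑ k, blk X i k * blk Y k j := by
  ext a b
  simp only [blk, of_apply, mul_apply, Matrix.sum_apply, Fintype.sum_sigma]

@[simp] lemma blk_one_self (i : Fin r) : blk (1 : Matrix (BIx n) (BIx n) ℝ) i i = 1 := by
  ext a b
  simp [blk, one_apply]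

lemma blk_one_of_ne {i j : Fin r} (h : i ≠ j) : blk (1 : Matrix (BIx n) (BIx n) ℝ) i j = 0 := by
  ext a b
  simp [blk, one_apply, h]

lemma IB_eq_diagonal (B : Finset (Fin r)) :
    IB n B = diagonal fun p => if p.1 ∈ B then 1 else 0 := by
  ext p q
  by_cases h : p = q <;> simp [IB, diagonal, h]

lemma blk_IB_self (B : Finset (Fin r)) (i : Fin r) :
    blk (IB n B) i i = if i ∈ B then 1 else 0 := by
  ext a b
  by_cases h : a = b <;> by_cases hi : i ∈ B <;> simp [IB, blk, one_apply, h, hi]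

lemma blk_IB_of_ne (B : Finset (Fin r)) {i j : Fin r} (h : i ≠ j) : blk (IB n B) i j = 0 := by
  ext a b
  simp [IB, blk, h]

lemma IB_mul_apply (B : Finset (Fin r)) (X : Matrix (BIx n) (BIx n) ℝ) (p q : BIx n) :
    (IB n B * X) p q = if p.1 ∈ B then X p q else 0 := by
  simp [IB_eq_diagonal, diagonal_mul]

lemma blk_IB_mul (B : Finset (Fin r)) (X : Matrix (BIx n) (BIx n) ℝ) (i j : Fin r) :
    blk (IB n B * X) i j = if i ∈ B then blk X i j else 0 := by
  ext a b
  by_cases hi : i ∈ B <;> simp [blk, IB_mul_apply, hi]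

lemma IB_transpose (B : Finset (Fin r)) : (IB n B)ᵀ = IB n B := by
  simp [IB_eq_diagonal]

lemma IB_mul_IB (B C : Finset (Fin r)) : IB n B * IB n C = IB n (B ∩ C) := by
  simp only [IB_eq_diagonal, diagonal_mul_diagonal, Finset.mem_inter]
  congr 1; funext p; split_ifs <;> simp_all

lemma IB_union {B C : Finset (Fin r)} (h : Disjoint B C) : IB n (B ∪ C) = IB n B + IB n C := by
  simp only [IB_eq_diagonal, diagonal_add, Finset.mem_union]
  congr 1; funext p
  by_cases hB : p.1 ∈ B
  · simp [hB, Finset.disjoint_left.mp h hB]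
  · simp [hB]

lemma IB_univ : IB n (Finset.univ : Finset (Fin r)) = 1 := by
  simp [IB_eq_diagonal]

lemma IB_empty : IB n (∅ : Finset (Fin r)) = 0 := by
  simp [IB_eq_diagonal]

lemma IB_single_mul_mul_IB_single {X : Matrix (BIx n) (BIx n) ℝ} {m : Fin r} {c : ℝ}
    (hc : blk X m m = c • 1) : IB n {m} * X * IB n {m} = c • IB n {m} := by
  ext ⟨i, a⟩ ⟨j, b⟩
  simp only [IB_eq_diagonal, diagonal_mul, mul_diagonal, Finset.mem_singleton,
    Matrix.smul_apply, diagonal_apply, Sigma.mk.inj_iff]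
  by_cases hi : i = m <;> by_cases hj : j = m
  · subst hi hj
    simpa [blk, one_apply] using congrFun (congrFun hc a) b
  all_goals aesop

lemma blk_eq_zero_of_mul_IB_eq {X : Matrix (BIx n) (BIx n) ℝ} {B : Finset (Fin r)}
    (hX : X * IB n B = IB n B) {i j : Fin r} (hi : i ∉ B) (hj : j ∈ B) : blk X i j = 0 := by
  ext a b
  have := congrFun (congrFun hX ⟨i, a⟩) ⟨j, b⟩
  simp only [IB_eq_diagonal, mul_diagonal, diagonal_apply, hj, if_true, mul_one] at this
  simpa [blk, show (⟨i, a⟩ : BIx n) ≠ ⟨j, b⟩ by rintro ⟨⟩; exact hi hj] using this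

end BlockCalculus

section Ishi

variable {n : Fin r → ℕ} {Vb : ∀ i j : Fin r, Submodule ℝ (Matrix (Fin (n i)) (Fin (n j)) ℝ)}

def IshiDiag (Vb : ∀ i j : Fin r, Submodule ℝ (Matrix (Fin (n i)) (Fin (n j)) ℝ)) : Prop :=
  ∀ i : Fin r, Vb i i = Submodule.span ℝ {(1 : Matrix (Fin (n i)) (Fin (n i)) ℝ)}

def IshiV1 (Vb : ∀ i j : Fin r, Submodule ℝ (Matrix (Fin (n i)) (Fin (n j)) ℝ)) : Prop :=
  ∀ i j k : Fin r, i ≤ j → j ≤ k → ∀ A ∈ Vb i j, ∀ B ∈ Vb j k, A * B ∈ Vb i k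

def IshiV2 (Vb : ∀ i j : Fin r, Submodule ℝ (Matrix (Fin (n i)) (Fin (n j)) ℝ)) : Prop :=
  ∀ i j k : Fin r, i ≤ j → j < k → ∀ A ∈ Vb i j, ∀ B ∈ Vb i k, Aᵀ * B ∈ Vb j k

def IshiV3 (Vb : ∀ i j : Fin r, Submodule ℝ (Matrix (Fin (n i)) (Fin (n j)) ℝ)) : Prop :=
  ∀ i j : Fin r, i ≤ j → ∀ A ∈ Vb i j,
    ∃ c : ℝ, Aᵀ * A = c • (1 : Matrix (Fin (n j)) (Fin (n j)) ℝ)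

def Vspace (n : Fin r → ℕ)
    (Vb : ∀ i j : Fin r, Submodule ℝ (Matrix (Fin (n i)) (Fin (n j)) ℝ)) :
    Submodule ℝ (Matrix (BIx n) (BIx n) ℝ) where
  carrier := Vset n Vb
  add_mem' hX hY := ⟨hX.1.add hY.1, fun i j hij => add_mem (hX.2 i j hij) (hY.2 i j hij)⟩
  zero_mem' := ⟨isSymm_zero, fun _ _ _ => Submodule.zero_mem _⟩
  smul_mem' c _ hX := ⟨hX.1.smul c, fun i j hij => Submodule.smul_mem _ c (hX.2 i j hij)⟩

lemma smul_one_mem_of_diag (hdiag : IshiDiag Vb) (i : Fin r) (c : ℝ) :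
    c • (1 : Matrix (Fin (n i)) (Fin (n i)) ℝ) ∈ Vb i i := by
  rw [hdiag i]
  exact Submodule.smul_mem _ c (Submodule.mem_span_singleton_self _)

lemma exists_blk_self_eq_smul_one (hdiag : IshiDiag Vb) {X : Matrix (BIx n) (BIx n) ℝ}
    (hX : X ∈ Vset n Vb) (i : Fin r) : ∃ c : ℝ, blk X i i = c • 1 := by
  have := hX.2 i i le_rfl
  rw [hdiag i, Submodule.mem_span_singleton] at this
  exact this.imp fun _ h => h.symm

lemma IB_mem_Vset (hdiag : IshiDiag Vb) (B : Finset (Fin r)) : IB n B ∈ Vset n Vb := by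
  refine ⟨IB_transpose B, fun i j hij => ?_⟩
  rcases hij.eq_or_lt with rfl | hij
  · rw [blk_IB_self]
    split_ifs
    · simpa using smul_one_mem_of_diag hdiag i 1
    · exact Submodule.zero_mem _
  · rw [blk_IB_of_ne B hij.ne]
    exact Submodule.zero_mem _

lemma mem_TT_of_mem_TTpp {T : Matrix (BIx n) (BIx n) ℝ} (hT : T ∈ TTpp n Vb) : T ∈ TT n Vb :=
  ⟨hT.1, fun i => (hT.2.1 i).imp fun _ hc => hc.2, hT.2.2⟩

lemma blk_mem_of_mem_TT (hdiag : IshiDiag Vb)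
    {T : Matrix (BIx n) (BIx n) ℝ} (hT : T ∈ TT n Vb) {i j : Fin r} (hij : i ≤ j) :
    blk T i j ∈ Vb i j := by
  rcases hij.eq_or_lt with rfl | hij
  · obtain ⟨c, hc⟩ := hT.2.1 i
    exact hc ▸ smul_one_mem_of_diag hdiag i c
  · exact hT.2.2 i j hij

lemma transpose_mul_self_mem_Vset (hdiag : IshiDiag Vb) (hV2 : IshiV2 Vb) (hV3 : IshiV3 Vb)
    {T : Matrix (BIx n) (BIx n) ℝ} (hT : T ∈ TT n Vb) : Tᵀ * T ∈ Vset n Vb := by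
  refine ⟨isSymm_transpose_mul_self T, fun i j hij => ?_⟩
  rw [blk_mul]
  refine Submodule.sum_mem _ fun k _ => ?_
  rw [blk_transpose]
  rcases lt_or_ge i k with hik | hki
  · rw [hT.1 k i hik, transpose_zero, Matrix.zero_mul]
    exact Submodule.zero_mem _
  rcases hki.eq_or_lt with rfl | hki
  · obtain ⟨c, hc⟩ := hT.2.1 k
    rw [hc, transpose_smul, transpose_one, Matrix.smul_mul, Matrix.one_mul]
    exact Submodule.smul_mem _ c (blk_mem_of_mem_TT hdiag hT hij)
  rcases hij.eq_or_lt with rfl | hij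
  · obtain ⟨c, hc⟩ := hV3 k i hki.le _ (hT.2.2 k i hki)
    exact hc ▸ smul_one_mem_of_diag hdiag i c
  · exact hV2 k i j hki.le hij _ (hT.2.2 k i hki) _ (hT.2.2 k j (hki.trans hij))

lemma one_mem_TTpp : (1 : Matrix (BIx n) (BIx n) ℝ) ∈ TTpp n Vb :=
  ⟨fun _ _ hji => blk_one_of_ne hji.ne', fun i => ⟨1, one_pos, by rw [blk_one_self, one_smul]⟩,
    fun _ _ hij => by rw [blk_one_of_ne hij.ne]; exact Submodule.zero_mem _⟩

lemma TTpp.mul_mem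
    (hdiag : IshiDiag Vb) (hV1 : IshiV1 Vb)
    {T S : Matrix (BIx n) (BIx n) ℝ} (hT : T ∈ TTpp n Vb) (hS : S ∈ TTpp n Vb) :
    T * S ∈ TTpp n Vb := by
  have hT' := mem_TT_of_mem_TTpp hT
  have hS' := mem_TT_of_mem_TTpp hS
  refine ⟨fun i j hji => ?_, fun i => ?_, fun i j hij => ?_⟩
  · rw [blk_mul]
    refine Finset.sum_eq_zero fun k _ => ?_
    rcases le_or_gt k j with hkj | hjk
    · rw [hT.1 i k (hkj.trans_lt hji), Matrix.zero_mul]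
    · rw [hS.1 k j hjk, Matrix.mul_zero]
  · obtain ⟨c, hc, hcT⟩ := hT.2.1 i
    obtain ⟨d, hd, hdS⟩ := hS.2.1 i
    refine ⟨c * d, mul_pos hc hd, ?_⟩
    rw [blk_mul, Finset.sum_eq_single i]
    · rw [hcT, hdS, Matrix.smul_mul, Matrix.mul_smul, smul_smul, Matrix.mul_one]
    · intro k _ hki
      rcases lt_or_gt_of_ne hki with h | h
      · rw [hT.1 i k h, Matrix.zero_mul]
      · rw [hS.1 k i h, Matrix.mul_zero]
    · simp
  · rw [blk_mul]
    refine Submodule.sum_mem _ fun k _ => ?_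
    rcases lt_or_ge k i with hki | hik
    · rw [hT.1 i k hki, Matrix.zero_mul]; exact Submodule.zero_mem _
    rcases le_or_gt k j with hkj | hjk
    · exact hV1 i k j hik hkj _ (blk_mem_of_mem_TT hdiag hT' hik) _
        (blk_mem_of_mem_TT hdiag hS' hkj)
    · rw [hS.1 k j hjk, Matrix.mul_zero]; exact Submodule.zero_mem _

lemma TTpp.blockTriangular {T : Matrix (BIx n) (BIx n) ℝ} (hT : T ∈ TTpp n Vb) :
    T.BlockTriangular Sigma.fst := by
  rintro ⟨i, a⟩ ⟨j, b⟩ hji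
  exact congrFun (congrFun (hT.1 i j hji) a) b

lemma TTpp.isUnit {T : Matrix (BIx n) (BIx n) ℝ} (hT : T ∈ TTpp n Vb) : IsUnit T := by
  rw [isUnit_iff_isUnit_det, isUnit_iff_ne_zero, (TTpp.blockTriangular hT).det]
  refine Finset.prod_ne_zero_iff.mpr fun i _ => ?_
  obtain ⟨c, hc, hcT⟩ := hT.2.1 i
  have hblock : T.toSquareBlock Sigma.fst i = c • 1 := by
    ext ⟨⟨j, a⟩, hj⟩ ⟨⟨k, b⟩, hk⟩
    obtain rfl : j = i := hj
    obtain rfl : k = j := hk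
    simpa [toSquareBlock_def, blk, one_apply] using congrFun (congrFun hcT a) b
  rw [hblock, det_smul, det_one, mul_one]
  exact pow_ne_zero _ hc.ne'

lemma TTpp.posDef_transpose_mul_self {T : Matrix (BIx n) (BIx n) ℝ} (hT : T ∈ TTpp n Vb) :
    (Tᵀ * T).PosDef := by
  have := (TTpp.isUnit hT).posDef_star_left_conjugate_iff.mpr (PosDef.one (n := BIx n) (R := ℝ))
  simpa [star_eq_conjTranspose] using this

lemma TTpp.eq_of_transpose_mul_self_eq (hn : ∀ i, 0 < n i) {T S : Matrix (BIx n) (BIx n) ℝ}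
    (hT : T ∈ TTpp n Vb) (hS : S ∈ TTpp n Vb) (h : Tᵀ * T = Sᵀ * S) : T = S := by
  refine blk_ext fun i => ?_
  induction i using WellFoundedLT.induction with
  | _ i IH =>
    have hrow : ∀ j, (blk T i i)ᵀ * blk T i j = (blk S i i)ᵀ * blk S i j := by
      intro j
      have hij := congrArg (blk · i j) h
      simp only [blk_mul, blk_transpose] at hij
      rw [← Finset.add_sum_erase _ _ (Finset.mem_univ i),
        ← Finset.add_sum_erase _ _ (Finset.mem_univ i)] at hij
      refine add_right_cancel (hij.trans (congrArg _ (Finset.sum_congr rfl fun k hk => ?_)))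
      rcases lt_or_gt_of_ne (Finset.ne_of_mem_erase hk) with hki | hik
      · rw [IH k hki, IH k hki]
      · rw [hT.1 k i hik, hS.1 k i hik, transpose_zero, Matrix.zero_mul, Matrix.zero_mul]
    obtain ⟨c, hc, hcT⟩ := hT.2.1 i
    obtain ⟨d, hd, hdS⟩ := hS.2.1 i
    have hcd : c = d := by
      have hii := congrFun (congrFun (hrow i) ⟨0, hn i⟩) ⟨0, hn i⟩
      simp only [hcT, hdS, transpose_smul, transpose_one, smul_mul_smul,
        Matrix.smul_apply, one_apply_eq, smul_eq_mul, mul_one] at hii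
      exact (mul_self_inj hc.le hd.le).mp hii
    subst hcd
    intro j
    rcases lt_trichotomy j i with hji | rfl | hij
    · rw [hT.1 i j hji, hS.1 i j hji]
    · rw [hcT, hdS]
    · simpa [hcT, hdS, hc.ne'] using hrow j

lemma IB_single_mul_mem_TT (hdiag : IshiDiag Vb)
    {X : Matrix (BIx n) (BIx n) ℝ} (hXV : X ∈ Vset n Vb) {m : Fin r}
    (hX : ∀ j < m, blk X m j = 0) : IB n {m} * X ∈ TT n Vb := by
  simp only [TT, Set.mem_ofPred_eq, blk_IB_mul, Finset.mem_singleton]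
  refine ⟨fun i j hji => ?_, fun i => ?_, fun i j hij => ?_⟩
  · split_ifs with hi
    · exact hi ▸ hX j (hi ▸ hji)
    · rfl
  · split_ifs with hi
    · exact exists_blk_self_eq_smul_one hdiag hXV i
    · exact ⟨0, (zero_smul _ _).symm⟩
  · split_ifs
    · exact hXV.2 i j hij.le
    · exact Submodule.zero_mem _

lemma one_sub_IB_add_smul_IB_mul_mem_TTpp (hdiag : IshiDiag Vb)
    {X : Matrix (BIx n) (BIx n) ℝ} (hXV : X ∈ Vset n Vb) {m : Fin r}
    (hX : ∀ j < m, blk X m j = 0) {s : ℝ} (hs : 0 < s) (hXm : blk X m m = (s * s) • 1) :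
    1 - IB n {m} + s⁻¹ • (IB n {m} * X) ∈ TTpp n Vb := by
  have hU := IB_single_mul_mem_TT hdiag hXV hX
  refine ⟨fun i j hji => ?_, fun i => ?_, fun i j hij => ?_⟩
  · simp [blk_one_of_ne hji.ne', blk_IB_of_ne _ hji.ne', hU.1 i j hji]
  · by_cases hi : i = m
    · subst hi
      refine ⟨s, hs, ?_⟩
      simp [blk_IB_self, blk_IB_mul, hXm, smul_smul, hs.ne']
    · exact ⟨1, one_pos, by simp [blk_IB_self, blk_IB_mul, hi]⟩
  · simpa [blk_one_of_ne hij.ne, blk_IB_of_ne _ hij.ne] using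
      Submodule.smul_mem _ s⁻¹ (hU.2.2 i j hij)

lemma paddedSchur_IB_single_mem_Vset (hdiag : IshiDiag Vb) (hV2 : IshiV2 Vb) (hV3 : IshiV3 Vb)
    {X : Matrix (BIx n) (BIx n) ℝ} (hX : X ∈ Vset n Vb) {m : Fin r}
    (hrow : ∀ j < m, blk X m j = 0) (c : ℝ) : paddedSchur c (IB n {m}) X ∈ Vset n Vb := by
  have hU : (IB n {m} * X)ᵀ * (IB n {m} * X) = X * IB n {m} * X := by
    rw [transpose_mul, IB_transpose, hX.1.eq, mul_assoc, ← mul_assoc (IB n {m}), IB_mul_IB,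
      Finset.inter_self, mul_assoc]
  have hVU := transpose_mul_self_mem_Vset hdiag hV2 hV3 (IB_single_mul_mem_TT hdiag hX hrow)
  rw [hU] at hVU
  exact (Vspace n Vb).add_mem ((Vspace n Vb).sub_mem hX ((Vspace n Vb).smul_mem _ hVU))
    (IB_mem_Vset hdiag _)

lemma exists_block_elimination (hn : ∀ i, 0 < n i) (hdiag : IshiDiag Vb) (hV2 : IshiV2 Vb)
    (hV3 : IshiV3 Vb) {X : Matrix (BIx n) (BIx n) ℝ} (hX : X ∈ Kcone n Vb)
    {B : Finset (Fin r)} {m : Fin r} (hmB : m ∉ B) (hBm : ∀ i < m, i ∈ B)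
    (hXB : X * IB n B = IB n B) :
    ∃ L ∈ TTpp n Vb, ∃ X' ∈ Kcone n Vb,
      X' * IB n (insert m B) = IB n (insert m B) ∧ X = Lᵀ * X' * L := by
  obtain ⟨hXpos, hXV⟩ := hX
  obtain ⟨c, hc⟩ := exists_blk_self_eq_smul_one hdiag hXV m
  have hc0 : 0 < c := by
    have := congrFun (congrFun hc ⟨0, hn m⟩) ⟨0, hn m⟩
    simp only [blk, of_apply, Matrix.smul_apply, one_apply_eq, smul_eq_mul, mul_one] at this
    exact this ▸ hXpos.diag_pos
  set s := √c
  have hs : 0 < s := Real.sqrt_pos.mpr hc0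
  have hss : s * s = c := Real.mul_self_sqrt hc0.le
  have hrow : ∀ j < m, blk X m j = 0 := fun j hj => blk_eq_zero_of_mul_IB_eq hXB hmB (hBm j hj)
  set P := IB n {m}
  have hP : P * P = P := by rw [IB_mul_IB, Finset.inter_self]
  have hPXP : P * X * P = c • P := IB_single_mul_mul_IB_single hc
  have hPB : P * IB n B = 0 := by
    rw [IB_mul_IB, Finset.disjoint_iff_inter_eq_empty.mp (Finset.disjoint_singleton_left.mpr hmB),
      IB_empty]
  set L := 1 - P + s⁻¹ • (P * X)
  have hL : L ∈ TTpp n Vb := one_sub_IB_add_smul_IB_mul_mem_TTpp hdiag hXV hrow hs (hss ▸ hc)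
  have hfact : X = Lᵀ * paddedSchur c P X * L := by
    have hLt : Lᵀ = 1 - P + s⁻¹ • (X * P) := by
      simp [L, P, IB_transpose, hXV.1.eq]
    rw [hLt, paddedSchur_factorization hP hPXP hss hs.ne']
  refine ⟨L, hL, paddedSchur c P X, ⟨?_, paddedSchur_IB_single_mem_Vset hdiag hV2 hV3 hXV hrow c⟩,
    ?_, hfact⟩
  · rw [← (TTpp.isUnit hL).posDef_star_left_conjugate_iff]
    simpa [star_eq_conjTranspose, ← hfact] using hXpos
  · have hXPX : X * P * X * IB n B = 0 := by rw [mul_assoc, hXB, mul_assoc, hPB, Matrix.mul_zero]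
    have hQ : paddedSchur c P X * IB n B = IB n B := by
      simp [paddedSchur, add_mul, sub_mul, hXB, hXPX, hPB]
    rw [Finset.insert_eq, IB_union (Finset.disjoint_singleton_left.mpr hmB), mul_add, hQ,
      paddedSchur_mul_self hP hPXP hc0.ne']

lemma exists_TTpp_of_mul_IB_eq (hn : ∀ i, 0 < n i) (hdiag : IshiDiag Vb) (hV1 : IshiV1 Vb)
    (hV2 : IshiV2 Vb) (hV3 : IshiV3 Vb) {k : ℕ} (hk : k ≤ r) (X : Matrix (BIx n) (BIx n) ℝ) (hX : X ∈ Kcone n Vb)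
    (hXk : X * IB n {i | (i : ℕ) < k} = IB n {i | (i : ℕ) < k}) :
    ∃ T ∈ TTpp n Vb, X = Tᵀ * T := by
  induction hk using Nat.decreasingInduction generalizing X with
  | self =>
    rw [Finset.filter_true_of_mem fun i _ => i.isLt, IB_univ, Matrix.mul_one] at hXk
    exact ⟨1, one_mem_TTpp, by rw [hXk, transpose_one, Matrix.one_mul]⟩
  | of_succ k hk IH =>
    obtain ⟨L, hL, X', hX', hX'k, rfl⟩ := exists_block_elimination hn hdiag hV2 hV3 hX
      (m := ⟨k, hk⟩) (by simp) (fun i hi => by simpa [Fin.lt_def] using hi) hXk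
    have : insert ⟨k, hk⟩ (Finset.univ.filter fun i : Fin r => (i : ℕ) < k) =
        Finset.univ.filter fun i : Fin r => (i : ℕ) < k + 1 := by
      ext i
      simp only [Finset.mem_insert, Fin.ext_iff, Finset.mem_filter, Finset.mem_univ, true_and]
      omega
    rw [this] at hX'k
    obtain ⟨T, hT, rfl⟩ := IH X' hX' hX'k
    exact ⟨T * L, TTpp.mul_mem hdiag hV1 hT hL, by simp only [transpose_mul, Matrix.mul_assoc]⟩

end Ishi

theorem kcone_eq_cholesky_general (r : ℕ)
    (n : Fin r → ℕ) (hn : ∀ i, 0 < n i)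
    (Vb : ∀ i j : Fin r, Submodule ℝ (Matrix (Fin (n i)) (Fin (n j)) ℝ))
    (hdiag : ∀ i : Fin r, Vb i i = Submodule.span ℝ {(1 : Matrix (Fin (n i)) (Fin (n i)) ℝ)})
    (hV1 : ∀ i j k : Fin r, i ≤ j → j ≤ k → ∀ A ∈ Vb i j, ∀ B ∈ Vb j k, A * B ∈ Vb i k)
    (hV2 : ∀ i j k : Fin r, i ≤ j → j < k → ∀ A ∈ Vb i j, ∀ B ∈ Vb i k, Aᵀ * B ∈ Vb j k)
    (hV3 : ∀ i j : Fin r, i ≤ j → ∀ A ∈ Vb i j,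
      ∃ c : ℝ, Aᵀ * A = c • (1 : Matrix (Fin (n j)) (Fin (n j)) ℝ))
    :
    (Kcone n Vb = {X | ∃ T ∈ TTpp n Vb, X = Tᵀ * T}) ∧
    (∀ X ∈ Kcone n Vb, ∃! T, T ∈ TTpp n Vb ∧ X = Tᵀ * T) := by
  have hfactor : ∀ X ∈ Kcone n Vb, ∃ T ∈ TTpp n Vb, X = Tᵀ * T := fun X hX =>
    exists_TTpp_of_mul_IB_eq hn hdiag hV1 hV2 hV3 (Nat.zero_le r) X hX (by simp [IB_empty])
  refine ⟨Set.Subset.antisymm hfactor ?_, fun X hX => ?_⟩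
  · rintro _ ⟨T, hT, rfl⟩
    exact ⟨TTpp.posDef_transpose_mul_self hT,
      transpose_mul_self_mem_Vset hdiag hV2 hV3 (mem_TT_of_mem_TTpp hT)⟩
  · obtain ⟨T, hT, hXT⟩ := hfactor X hX
    exact ⟨T, ⟨hT, hXT⟩, fun S ⟨hS, hXS⟩ =>
      TTpp.eq_of_transpose_mul_self_eq hn hS hT (hXS.symm.trans hXT)⟩

/-- **Cholesky parametrization of an Ishi spectrahedral cone.**
`K = S^n_{++} ∩ V` equals `{Tᵀ·T : T ∈ 𝕋₊₊}`, and for every `X ∈ K` there is a unique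
`T ∈ 𝕋₊₊` with `X = Tᵀ·T`. -/
theorem kcone_eq_cholesky (r : ℕ) (hr : 1 ≤ r)
    (n : Fin r → ℕ) (hn : ∀ i, 0 < n i)
    (Vb : ∀ i j : Fin r, Submodule ℝ (Matrix (Fin (n i)) (Fin (n j)) ℝ))
    (hdiag : ∀ i : Fin r, Vb i i = Submodule.span ℝ {(1 : Matrix (Fin (n i)) (Fin (n i)) ℝ)})
    (hV1 : ∀ i j k : Fin r, i ≤ j → j ≤ k → ∀ A ∈ Vb i j, ∀ B ∈ Vb j k, A * B ∈ Vb i k)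
    (hV2 : ∀ i j k : Fin r, i ≤ j → j < k → ∀ A ∈ Vb i j, ∀ B ∈ Vb i k, Aᵀ * B ∈ Vb j k)
    (hV3 : ∀ i j : Fin r, i ≤ j → ∀ A ∈ Vb i j,
      ∃ c : ℝ, Aᵀ * A = c • (1 : Matrix (Fin (n j)) (Fin (n j)) ℝ))
    :
    (Kcone n Vb = {X | ∃ T ∈ TTpp n Vb, X = Tᵀ * T}) ∧
    (∀ X ∈ Kcone n Vb, ∃! T, T ∈ TTpp n Vb ∧ X = Tᵀ * T) :=
  kcone_eq_cholesky_general r n hn Vb hdiag hV1 hV2 hV3
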